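/- Let F_{d+1} be the Fourier matrix of order d+1 and define, for z ∈ ℂ^d, the Lagrange polynomial values (ℓ_1(z); …; ℓ_{d+1}(z)) := (1/(d+1)) · F_{d+1}^* · (1; z) ∈ ℂ^{d+1}. Then for every z ∈ ℂ^d, Σ_{i=1}^{d+1} |ℓ_i(z)|² = (1 + ‖z‖₂²)/(d+1); in particular Σ_{i=1}^{d+1} |ℓ_i(z)|² ≤ 1 for all z in the torus 𝕋^d = {z ∈ ℂ^d : |z_j| = 1 for all j}, so the d+1 points obtained from the rows of F_{d+1} with first coordinate deleted form a Fejér set for 𝕋^d. -/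

import Mathlib

open Matrix

/-- The Fourier matrix `F_n = [ω^{jk}]_{1 ≤ j,k ≤ n}` of order `n`, where `ω = exp(2πi/n)`. -/
noncomputable def fourierMatrix (n : ℕ) : Matrix (Fin n) (Fin n) ℂ :=
  Matrix.of fun j k : Fin n =>
    Complex.exp (2 * Real.pi * Complex.I * (((j : ℕ) : ℂ) + 1) * (((k : ℕ) : ℂ) + 1) / n)

/-- The values at `z ∈ ℂ^d` of the degree-one fundamental Lagrange polynomials associated to
the `d+1` points of the torus obtained by deleting the first column of the Fourier matrix
`F_{d+1}`:  `(ℓ_1(z); …; ℓ_{d+1}(z)) = (1/(d+1)) F_{d+1}^* (1; z)`. -/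
noncomputable def torusLagrange (d : ℕ) (z : Fin d → ℂ) (i : Fin (d + 1)) : ℂ :=
  (((d : ℂ) + 1)⁻¹) * ((fourierMatrix (d + 1))ᴴ *ᵥ (Fin.cons 1 z : Fin (d + 1) → ℂ)) i

/-!
Up to the shift of indices, `F_n` is the character table of `ℤ/n`, so its rows are orthogonal:
`F_n F_nᴴ = n I`. Hence `F_nᴴ / √n` is an isometry of `ℂⁿ`, and the Lagrange vector
`(1/(d+1)) F_{d+1}ᴴ (1; z)` has squared norm `‖(1; z)‖² / (d+1) = (1 + ‖z‖²) / (d+1)`,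
which equals `1` on the torus.
-/

open Finset

section Orthogonality

variable {K : Type*} [Field K]

theorem geom_sum_eq_zero_of_pow_eq_one {c : K} {n : ℕ} (hc : c ^ n = 1) (hc1 : c ≠ 1) :
    ∑ i ∈ range n, c ^ i = 0 := by
  have h := geom_sum_mul c n
  rw [hc, sub_self] at h
  exact (mul_eq_zero.mp h).resolve_right (sub_ne_zero.mpr hc1)

theorem IsPrimitiveRoot.sum_pow_mul_inv_pow {ζ : K} {n : ℕ} (hζ : IsPrimitiveRoot ζ n)
    (j l : Fin n) :
    ∑ k : Fin n, ζ ^ ((j + 1 : ℕ) * (k + 1 : ℕ)) * (ζ ^ ((l + 1 : ℕ) * (k + 1 : ℕ)))⁻¹ =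
      if j = l then (n : K) else 0 := by
  have hζ0 : ζ ≠ 0 := hζ.ne_zero (NeZero.of_pos j.pos).out
  set c := ζ ^ ((j : ℤ) - l)
  have hterm : ∀ k : Fin n,
      ζ ^ ((j + 1 : ℕ) * (k + 1 : ℕ)) * (ζ ^ ((l + 1 : ℕ) * (k + 1 : ℕ)))⁻¹ =
        c ^ ((k : ℕ) + 1) := by
    intro k
    rw [← zpow_natCast, ← zpow_natCast, ← zpow_natCast, ← _root_.zpow_neg, ← zpow_add₀ hζ0,
      ← _root_.zpow_mul]
    congr 1
    push_cast
    ring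
  simp only [hterm]
  split_ifs with hjl
  · simp [c, hjl]
  · have hc1 : c ≠ 1 := by
      rw [Ne, hζ.zpow_eq_one_iff_dvd]
      intro hdvd
      have hlt : |(j : ℤ) - l| < n := by
        rw [abs_sub_lt_iff]
        omega
      have hzero := Int.eq_zero_of_abs_lt_dvd hdvd hlt
      exact hjl (Fin.ext (by omega))
    have hcn : c ^ n = 1 := by
      rw [← zpow_natCast, ← _root_.zpow_mul, mul_comm, _root_.zpow_mul, hζ.zpow_eq_one,
        _root_.one_zpow]
    rw [Fin.sum_univ_eq_sum_range (fun k => c ^ (k + 1))]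
    simp only [pow_succ', ← mul_sum, geom_sum_eq_zero_of_pow_eq_one hcn hc1, mul_zero]

end Orthogonality

section Isometry

variable {𝕜 : Type*} [RCLike 𝕜] {m n : Type*} [Fintype m] [Fintype n]

theorem star_dotProduct_self_eq_sum_norm_sq (v : n → 𝕜) :
    star v ⬝ᵥ v = ((∑ i, ‖v i‖ ^ 2 : ℝ) : 𝕜) := by
  simp [dotProduct, RCLike.conj_mul]

theorem sum_norm_sq_conjTranspose_mulVec [DecidableEq m] {A : Matrix m n 𝕜} {c : ℝ}
    (hA : A * Aᴴ = (c : 𝕜) • 1) (v : m → 𝕜) :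
    ∑ i, ‖(Aᴴ *ᵥ v) i‖ ^ 2 = c * ∑ i, ‖v i‖ ^ 2 := by
  apply (RCLike.ofReal_injective (K := 𝕜))
  rw [RCLike.ofReal_mul, ← star_dotProduct_self_eq_sum_norm_sq,
    ← star_dotProduct_self_eq_sum_norm_sq, star_mulVec, conjTranspose_conjTranspose,
    ← dotProduct_mulVec, mulVec_mulVec, hA, smul_mulVec, one_mulVec, dotProduct_smul,
    smul_eq_mul]

end Isometry

theorem fourierMatrix_apply (n : ℕ) (j k : Fin n) :
    fourierMatrix n j k =
      Complex.exp (2 * Real.pi * Complex.I / n) ^ ((j + 1 : ℕ) * (k + 1 : ℕ)) := by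
  rw [fourierMatrix, of_apply, ← Complex.exp_nat_mul]
  congr 1
  push_cast
  ring

theorem fourierMatrix_mul_conjTranspose (n : ℕ) :
    fourierMatrix n * (fourierMatrix n)ᴴ = ((n : ℝ) : ℂ) • 1 := by
  ext j l
  have hn : n ≠ 0 := (NeZero.of_pos j.pos).out
  have hζ := Complex.isPrimitiveRoot_exp n hn
  have hstar : ∀ m : ℕ, star (Complex.exp (2 * Real.pi * Complex.I / n) ^ m) =
      (Complex.exp (2 * Real.pi * Complex.I / n) ^ m)⁻¹ := fun m =>
    (Complex.inv_eq_conj (by rw [norm_pow, hζ.norm'_eq_one hn, one_pow])).symm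
  simp only [mul_apply, conjTranspose_apply, fourierMatrix_apply, hstar, hζ.sum_pow_mul_inv_pow,
    Matrix.smul_apply, one_apply, smul_eq_mul, mul_ite, mul_one, mul_zero, Complex.ofReal_natCast]

theorem sum_norm_sq_torusLagrange (d : ℕ) (z : Fin d → ℂ) :
    ∑ i, ‖torusLagrange d z i‖ ^ 2 = (1 + ∑ k, ‖z k‖ ^ 2) / ((d : ℝ) + 1) := by
  have hv : ∑ i, ‖(Fin.cons 1 z : Fin (d + 1) → ℂ) i‖ ^ 2 = 1 + ∑ k, ‖z k‖ ^ 2 := by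
    simp [Fin.sum_univ_succ]
  have hF := sum_norm_sq_conjTranspose_mulVec (c := ((d + 1 : ℕ) : ℝ))
    (fourierMatrix_mul_conjTranspose (d + 1)) (Fin.cons 1 z)
  have hnorm : ‖((d : ℂ) + 1)⁻¹‖ = ((d : ℝ) + 1)⁻¹ := by
    rw [norm_inv, ← Nat.cast_succ, Complex.norm_natCast, Nat.cast_succ]
  have hd : (d : ℝ) + 1 ≠ 0 := by positivity
  simp only [torusLagrange, norm_mul, mul_pow, ← mul_sum, hF, hv, hnorm, Nat.cast_succ]
  field_simp

theorem fourier_fejer_general (d : ℕ) (z : Fin d → ℂ) :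
    ∑ i : Fin (d + 1), ‖torusLagrange d z i‖ ^ 2 =
      (1 + ∑ k : Fin d, ‖z k‖ ^ 2) / ((d : ℝ) + 1) ∧
    ((∀ k, ‖z k‖ = 1) →
      ∑ i : Fin (d + 1), ‖torusLagrange d z i‖ ^ 2 ≤ 1) := by
  refine ⟨sum_norm_sq_torusLagrange d z, fun hz => ?_⟩
  have hd : (d : ℝ) + 1 ≠ 0 := by positivity
  simp [sum_norm_sq_torusLagrange, hz, add_comm, hd]

/-- for every `z ∈ ℂ^d`, the degree-one Lagrange polynomials for the Fourier
points satisfy `∑ᵢ |ℓᵢ(z)|² = (1 + ‖z‖₂²)/(d+1)`; in particular `∑ᵢ |ℓᵢ(z)|² ≤ 1` for all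
`z` in the torus `𝕋^d`, so the `d+1` points obtained from the rows of `F_{d+1}` with first
coordinate deleted form a Fejér set for `𝕋^d`. -/
theorem fourier_fejer (d : ℕ) (hd : 1 ≤ d) (z : Fin d → ℂ) :
    ∑ i : Fin (d + 1), ‖torusLagrange d z i‖ ^ 2 =
      (1 + ∑ k : Fin d, ‖z k‖ ^ 2) / ((d : ℝ) + 1) ∧
    ((∀ k, ‖z k‖ = 1) →
      ∑ i : Fin (d + 1), ‖torusLagrange d z i‖ ^ 2 ≤ 1) :=
  fourier_fejer_general d z
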